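/- For all i ≥ 2, the modular elements of the rank-metric lattice L_i(n,m;q) are exactly the F_{q^m}-subspaces X of (F_{q^m})^n all of whose elements have rank at most i, together with the full space (F_{q^m})^n. -/

import Mathlib

open Submodule

/-- The rank of a vector `v ∈ L^n`: the `Fq`-dimension of the `Fq`-span of its entries. -/
noncomputable def rkVec (Fq : Type*) {L : Type*} [Field Fq] [Field L] [Algebra Fq L]
    {n : ℕ} (v : Fin n → L) : ℕ :=
  Module.finrank Fq ↥(Submodule.span Fq (Set.range v))

/-- The rank-metric lattice `L_i(n,m;q)`: subspaces of `L^n` spanned by their vectors of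
rank at most `i`. -/
def RML (Fq L : Type*) [Field Fq] [Field L] [Algebra Fq L] (n i : ℕ) :
    Set (Submodule L (Fin n → L)) :=
  {X | X = Submodule.span L {x | x ∈ X ∧ rkVec Fq x ≤ i}}

/-- The meet in the rank-metric lattice: span of the rank-`≤ i` vectors of the intersection. -/
def rmlMeet (Fq : Type*) {L : Type*} [Field Fq] [Field L] [Algebra Fq L] {n : ℕ} (i : ℕ)
    (X Y : Submodule L (Fin n → L)) : Submodule L (Fin n → L) :=
  Submodule.span L {x | x ∈ X ⊓ Y ∧ rkVec Fq x ≤ i}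

/-- `X` is a modular element of the rank-metric lattice `L_i`. -/
def IsModularElt (Fq : Type*) {L : Type*} [Field Fq] [Field L] [Algebra Fq L] {n : ℕ} (i : ℕ)
    (X : Submodule L (Fin n → L)) : Prop :=
  ∀ Y ∈ RML Fq L n i,
    Module.finrank L ↥(rmlMeet Fq i X Y) + Module.finrank L ↥(X ⊔ Y)
      = Module.finrank L ↥X + Module.finrank L ↥Y

/-!
If every vector of `X` has rank at most `i`, then `X ∧ᵢ Y = X ∩ Y` and modularity is the
dimension formula; for `X = ⊤` one has `X ∧ᵢ Y = Y`.

Conversely, let `X` be modular. If `y`, `z` have rank at most `i` and `y + z ∈ X` has rank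
greater than `i`, then `Y = span {y, z}` lies in the lattice and `X ∧ᵢ Y = 0` unless `y ∈ X`;
since `y + z ∈ X ∩ Y`, modularity forces `y ∈ X`. Applied to the two splittings `y + z` and
`(y + w) + (z - w)`, this puts `w` in `X` whenever all four ranks are at most `i`.

As `X` is spanned by vectors of rank `≤ i`, it contains some `x` with `i < rk x ≤ 2i`. Expand
the entries of `x` in an `Fq`-basis `b₀, b₁, …` of their span and let `y` collect the terms of
`b₀, …, b_{i-1}`, `z` the rest. If `rk x < 2i`, then `w = (c_k • b₀)_k` is admissible for every
`c ∈ Fq^n`, so `X` is the whole space. If `rk x = 2i`, taking for `c` the coefficients of the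
last basis vector shows that `X` contains an element of rank `2i - 1`.
-/

instance Module.Finite.span_range {R M ι : Type*} [Semiring R] [AddCommMonoid M] [Module R M]
    [Finite ι] (v : ι → M) : Module.Finite R (span R (Set.range v)) :=
  span_of_finite R (Set.finite_range v)

section Rank

variable {Fq L : Type*} [Field Fq] [Field L] [Algebra Fq L] {n : ℕ}

lemma rkVec_le_of_forall_mem_span {s : ℕ} (f : Fin s → L) {v : Fin n → L}
    (h : ∀ k, v k ∈ span Fq (Set.range f)) : rkVec Fq v ≤ s :=
  (Submodule.finrank_mono (span_le.mpr (Set.range_subset_iff.mpr h))).trans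
    ((finrank_range_le_card f).trans (Fintype.card_fin s).le)

lemma rkVec_zero : rkVec Fq (0 : Fin n → L) = 0 :=
  Nat.le_zero.mp (rkVec_le_of_forall_mem_span Fin.elim0 fun _ => zero_mem _)

lemma rkVec_fun_smul_le_one (c : Fin n → Fq) (β : L) : rkVec Fq (fun k => c k • β) ≤ 1 :=
  rkVec_le_of_forall_mem_span (fun _ : Fin 1 => β) fun _ => smul_mem _ _ (subset_span ⟨0, rfl⟩)

lemma rkVec_sum_smul_le {s : ℕ} (b : Fin s → L) (c : Fin n → Fin s → Fq) :
    rkVec Fq (fun k => ∑ j, c k j • b j) ≤ s :=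
  rkVec_le_of_forall_mem_span b fun _ => (mem_span_range_iff_exists_fun Fq).mpr ⟨_, rfl⟩

lemma rkVec_smul_le (a : L) (v : Fin n → L) : rkVec Fq (a • v) ≤ rkVec Fq v := by
  have h : Set.range (a • v) = LinearMap.mulLeft Fq a '' Set.range v := by
    rw [← Set.range_comp]; rfl
  rw [rkVec, h, span_image]
  exact Submodule.finrank_map_le _ _

lemma rkVec_smul {a : L} (ha : a ≠ 0) (v : Fin n → L) : rkVec Fq (a • v) = rkVec Fq v := by
  refine (rkVec_smul_le a v).antisymm ?_
  simpa [inv_smul_smul₀ ha] using rkVec_smul_le (Fq := Fq) a⁻¹ (a • v)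

lemma rkVec_neg (v : Fin n → L) : rkVec Fq (-v) = rkVec Fq v := by
  rw [← neg_one_smul L v, rkVec_smul (neg_ne_zero.mpr one_ne_zero)]

lemma rkVec_add_le (u v : Fin n → L) : rkVec Fq (u + v) ≤ rkVec Fq u + rkVec Fq v := by
  have h : span Fq (Set.range (u + v)) ≤ span Fq (Set.range u) ⊔ span Fq (Set.range v) :=
    span_le.mpr <| Set.range_subset_iff.mpr fun k =>
      add_mem (mem_sup_left (subset_span ⟨k, rfl⟩)) (mem_sup_right (subset_span ⟨k, rfl⟩))
  exact (Submodule.finrank_mono h).trans (Submodule.finrank_add_le_finrank_add_finrank _ _)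

lemma rkVec_sub_le (u v : Fin n → L) : rkVec Fq (u - v) ≤ rkVec Fq u + rkVec Fq v := by
  simpa only [sub_eq_add_neg, rkVec_neg] using rkVec_add_le (Fq := Fq) u (-v)

lemma exists_linearIndependent_sum_smul_eq {r : ℕ} {v : Fin n → L} (h : rkVec Fq v = r) :
    ∃ (b : Fin r → L) (c : Fin n → Fin r → Fq),
      LinearIndependent Fq b ∧ v = fun k => ∑ j, c k j • b j := by
  set V := span Fq (Set.range v)
  let B := Module.finBasisOfFinrankEq Fq V h
  have hspan : span Fq (Set.range (V.subtype ∘ B)) = V := by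
    rw [Set.range_comp, span_image, B.span_eq, Submodule.map_top, range_subtype]
  have hv : ∀ k, v k ∈ span Fq (Set.range (V.subtype ∘ B)) :=
    fun k => by rw [hspan]; exact subset_span ⟨k, rfl⟩
  choose c hc using fun k => (mem_span_range_iff_exists_fun Fq).mp (hv k)
  exact ⟨_, c, B.linearIndependent.map' _ V.ker_subtype, funext fun k => (hc k).symm⟩

end Rank

section Modular

variable {Fq L : Type*} [Field Fq] [Field L] [Algebra Fq L] {n i : ℕ}
  {X : Submodule L (Fin n → L)}

lemma isModularElt_top : IsModularElt Fq i (⊤ : Submodule L (Fin n → L)) := by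
  intro Y hY
  rw [rmlMeet, top_inf_eq, ← hY, top_sup_eq, add_comm]

lemma isModularElt_of_forall_rkVec_le (h : ∀ x ∈ X, rkVec Fq x ≤ i) : IsModularElt Fq i X := by
  intro Y _
  have hset : {v | v ∈ X ⊓ Y ∧ rkVec Fq v ≤ i} = ↑(X ⊓ Y) :=
    Set.ext fun v => and_iff_left_of_imp fun hv => h v (mem_inf.mp hv).1
  have hmeet : rmlMeet Fq i X Y = X ⊓ Y := by rw [rmlMeet, hset, span_eq]
  rw [hmeet, add_comm, Submodule.finrank_sup_add_finrank_inf_eq]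

lemma span_pair_mem_RML {y z : Fin n → L} (hy : rkVec Fq y ≤ i) (hz : rkVec Fq z ≤ i) :
    span L {y, z} ∈ RML Fq L n i := by
  refine le_antisymm (span_le.mpr ?_) (span_le.mpr fun v hv => hv.1)
  rintro v (rfl | rfl)
  · exact subset_span ⟨subset_span (by simp), hy⟩
  · exact subset_span ⟨subset_span (by simp), hz⟩

lemma inf_eq_bot_of_isModularElt (hX : IsModularElt Fq i X) {Y : Submodule L (Fin n → L)}
    (hY : Y ∈ RML Fq L n i) (hmeet : rmlMeet Fq i X Y = ⊥) : X ⊓ Y = ⊥ := by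
  have h₁ := hX Y hY
  have h₂ := Submodule.finrank_sup_add_finrank_inf_eq X Y
  rw [hmeet, finrank_bot] at h₁
  exact Submodule.finrank_eq_zero.mp (by omega)

lemma rmlMeet_span_pair_eq_bot {y z : Fin n → L} (hyz : y + z ∈ X)
    (hrk : i < rkVec Fq (y + z)) (hy : y ∉ X) : rmlMeet Fq i X (span L {y, z}) = ⊥ := by
  refine eq_bot_iff.mpr (span_le.mpr ?_)
  rintro v ⟨⟨hvX, hvY⟩, hv⟩
  obtain ⟨a, b, rfl⟩ := mem_span_pair.mp hvY
  obtain rfl | hab := eq_or_ne a b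
  · rw [← smul_add] at hv ⊢
    obtain rfl | ha := eq_or_ne a 0
    · simp
    · rw [rkVec_smul ha] at hv
      omega
  · refine absurd ?_ hy
    have hsub : a • y + b • z - b • (y + z) = (a - b) • y := by module
    have hmem := X.smul_mem (a - b)⁻¹ (X.sub_mem hvX (X.smul_mem b hyz))
    rwa [hsub, smul_smul, inv_mul_cancel₀ (sub_ne_zero.mpr hab), one_smul] at hmem

lemma mem_of_add_mem_of_isModularElt (hX : IsModularElt Fq i X) {y z : Fin n → L}
    (hyz : y + z ∈ X) (hrk : i < rkVec Fq (y + z)) (hy : rkVec Fq y ≤ i)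
    (hz : rkVec Fq z ≤ i) : y ∈ X := by
  by_contra hyX
  have hbot := inf_eq_bot_of_isModularElt hX (span_pair_mem_RML hy hz)
    (rmlMeet_span_pair_eq_bot hyz hrk hyX)
  have hmem : y + z ∈ X ⊓ span L {y, z} :=
    ⟨hyz, add_mem (subset_span (by simp)) (subset_span (by simp))⟩
  rw [hbot, mem_bot] at hmem
  rw [hmem, rkVec_zero] at hrk
  omega

lemma mem_of_add_mem_of_isModularElt_of_rkVec_le (hX : IsModularElt Fq i X)
    {y z w : Fin n → L} (hyz : y + z ∈ X) (hrk : i < rkVec Fq (y + z))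
    (hy : rkVec Fq y ≤ i) (hz : rkVec Fq z ≤ i)
    (hyw : rkVec Fq (y + w) ≤ i) (hzw : rkVec Fq (z - w) ≤ i) : w ∈ X := by
  have hyX := mem_of_add_mem_of_isModularElt hX hyz hrk hy hz
  have hsplit : (y + w) + (z - w) = y + z := by abel
  rw [← hsplit] at hyz hrk
  have hywX := mem_of_add_mem_of_isModularElt hX hyz hrk hyw hzw
  simpa using X.sub_mem hywX hyX

end Modular

section HighRank

variable {Fq L : Type*} [Field Fq] [Field L] [Algebra Fq L] {n i : ℕ}
  {X : Submodule L (Fin n → L)}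

lemma Submodule.eq_top_of_forall_fun_smul_mem {β : L} (hβ : β ≠ 0)
    (h : ∀ c : Fin n → Fq, (fun k => c k • β) ∈ X) : X = ⊤ := by
  classical
  refine eq_top_iff'.mpr fun v => ?_
  rw [pi_eq_sum_univ v]
  refine sum_mem fun k _ => X.smul_mem _ ?_
  convert X.smul_mem β⁻¹ (h fun j => if k = j then 1 else 0) using 1
  funext j
  split_ifs <;> simp_all

lemma exists_mem_lt_rkVec_le_two_mul (hX : X ∈ RML Fq L n i) {z : Fin n → L} (hz : z ∈ X)
    (hrk : i < rkVec Fq z) : ∃ x ∈ X, i < rkVec Fq x ∧ rkVec Fq x ≤ 2 * i := by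
  by_contra! h
  suffices ∀ v ∈ span L {x | x ∈ X ∧ rkVec Fq x ≤ i}, v ∈ X ∧ rkVec Fq v ≤ i by
    have := (this z (hX.le hz)).2
    omega
  intro v hv
  induction hv using span_induction with
  | mem v hv => exact hv
  | zero => exact ⟨zero_mem _, by simp [rkVec_zero]⟩
  | add u w _ _ hu hw =>
    have huw := X.add_mem hu.1 hw.1
    have hle := rkVec_add_le (Fq := Fq) u w
    exact ⟨huw, not_lt.mp fun hlt => by have := h _ huw hlt; omega⟩
  | smul a v _ hv => exact ⟨X.smul_mem a hv.1, (rkVec_smul_le a v).trans hv.2⟩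

lemma eq_top_of_isModularElt_of_rkVec_lt (hX : IsModularElt Fq i X) {x : Fin n → L}
    (hx : x ∈ X) (hlt : i < rkVec Fq x) (hlt' : rkVec Fq x < 2 * i) : X = ⊤ := by
  obtain ⟨s, hs⟩ := Nat.exists_eq_add_of_le hlt.le
  obtain ⟨b, c, hb, hxbc⟩ := exists_linearIndependent_sum_smul_eq hs
  let j₀ : Fin i := ⟨0, by omega⟩
  let y : Fin n → L := fun k => ∑ j, c k (Fin.castAdd s j) • b (Fin.castAdd s j)
  let z : Fin n → L := fun k => ∑ j, c k (Fin.natAdd i j) • b (Fin.natAdd i j)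
  have hxyz : x = y + z := hxbc.trans (funext fun k => Fin.sum_univ_add _)
  have hy : ∀ k, y k ∈ span Fq (Set.range (b ∘ Fin.castAdd s)) :=
    fun k => (mem_span_range_iff_exists_fun Fq).mpr ⟨_, rfl⟩
  refine Submodule.eq_top_of_forall_fun_smul_mem (Fq := Fq) (hb.ne_zero (Fin.castAdd s j₀))
    fun γ => ?_
  rw [hxyz] at hx hlt
  refine mem_of_add_mem_of_isModularElt_of_rkVec_le hX hx hlt
    (rkVec_le_of_forall_mem_span _ hy) ((rkVec_sum_smul_le _ _).trans (by omega))
    (rkVec_le_of_forall_mem_span _ fun k =>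
      add_mem (hy k) (smul_mem _ _ (subset_span ⟨j₀, rfl⟩))) ?_
  calc rkVec Fq (z - fun k => γ k • b (Fin.castAdd s j₀))
      ≤ rkVec Fq z + rkVec Fq (fun k => γ k • b (Fin.castAdd s j₀)) := rkVec_sub_le _ _
    _ ≤ s + 1 := add_le_add (rkVec_sum_smul_le _ _) (rkVec_fun_smul_le_one _ _)
    _ ≤ i := by omega

lemma exists_mem_lt_rkVec_lt_two_mul (hi : 2 ≤ i) (hX : IsModularElt Fq i X) {x : Fin n → L}
    (hx : x ∈ X) (hrk : rkVec Fq x = 2 * i) :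
    ∃ x' ∈ X, i < rkVec Fq x' ∧ rkVec Fq x' < 2 * i := by
  obtain ⟨i', rfl⟩ : ∃ i', i = i' + 1 := ⟨i - 1, by omega⟩
  obtain ⟨b, c, hb, hxbc⟩ := exists_linearIndependent_sum_smul_eq (hrk.trans (two_mul _))
  let j₀ := Fin.castAdd (i' + 1) (0 : Fin (i' + 1))
  let jₗ := Fin.natAdd (i' + 1) (Fin.last i')
  let y : Fin n → L := fun k => ∑ j, c k (Fin.castAdd _ j) • b (Fin.castAdd _ j)
  let z : Fin n → L := fun k => ∑ j, c k (Fin.natAdd _ j) • b (Fin.natAdd _ j)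
  let z' : Fin n → L :=
    fun k => ∑ j : Fin i', c k (Fin.natAdd _ j.castSucc) • b (Fin.natAdd _ j.castSucc)
  let t : Fin n → L := fun k => c k jₗ • b jₗ
  let w : Fin n → L := fun k => c k jₗ • b j₀
  have hxyz : x = y + z := hxbc.trans (funext fun k => Fin.sum_univ_add _)
  have hz : z = z' + t := funext fun k => Fin.sum_univ_castSucc _
  have hy : ∀ k, y k ∈ span Fq (Set.range (b ∘ Fin.castAdd _)) :=
    fun k => (mem_span_range_iff_exists_fun Fq).mpr ⟨_, rfl⟩
  have hrk' : i' + 1 < rkVec Fq (y + z) := by rw [← hxyz, hrk]; omega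
  have hwX : w ∈ X := by
    refine mem_of_add_mem_of_isModularElt_of_rkVec_le hX (hxyz ▸ hx) hrk'
      (rkVec_le_of_forall_mem_span _ hy) (rkVec_sum_smul_le _ _)
      (rkVec_le_of_forall_mem_span _ fun k =>
        add_mem (hy k) (smul_mem _ _ (subset_span ⟨0, rfl⟩))) ?_
    have hzw : z - w = z' + fun k => c k jₗ • (b jₗ - b j₀) := by
      rw [hz]; funext k; simp only [Pi.add_apply, Pi.sub_apply, smul_sub, t, w]; abel
    rw [hzw]
    exact (rkVec_add_le _ _).trans
      (add_le_add (rkVec_sum_smul_le _ _) (rkVec_fun_smul_le_one _ _))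
  have htX : t ∈ X := by
    convert X.smul_mem (b jₗ * (b j₀)⁻¹) hwX using 1
    funext k
    simp [t, w, hb.ne_zero j₀]
  have hsum : y + z' + t = x := by rw [hxyz, hz, add_assoc]
  have hy' : rkVec Fq y ≤ i' + 1 := rkVec_le_of_forall_mem_span _ hy
  have hz' : rkVec Fq z' ≤ i' := rkVec_sum_smul_le _ _
  have ht : rkVec Fq t ≤ 1 := rkVec_fun_smul_le_one _ _
  have hlow := rkVec_add_le (Fq := Fq) (y + z') t
  have hup := rkVec_add_le (Fq := Fq) y z'
  rw [hsum, hrk] at hlow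
  refine ⟨y + z', ?_, by omega, by omega⟩
  simpa [← hsum] using X.sub_mem hx htX

lemma eq_top_of_isModularElt_of_lt_rkVec (hi : 2 ≤ i) (hX : X ∈ RML Fq L n i)
    (hmod : IsModularElt Fq i X) {z : Fin n → L} (hz : z ∈ X) (hrk : i < rkVec Fq z) :
    X = ⊤ := by
  obtain ⟨x, hx, hlt, hle⟩ := exists_mem_lt_rkVec_le_two_mul hX hz hrk
  rcases hle.lt_or_eq with hlt' | heq
  · exact eq_top_of_isModularElt_of_rkVec_lt hmod hx hlt hlt'
  · obtain ⟨x', hx', hlt, hlt'⟩ := exists_mem_lt_rkVec_lt_two_mul hi hmod hx heq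
    exact eq_top_of_isModularElt_of_rkVec_lt hmod hx' hlt hlt'

end HighRank

theorem modular_elements_characterization_general (n : ℕ)
    (Fq L : Type) [Field Fq] [Field L] [Algebra Fq L]
    (i : ℕ) (hi : 2 ≤ i)
    (X : Submodule L (Fin n → L)) (hX : X ∈ RML Fq L n i) :
    IsModularElt Fq i X ↔ ((∀ x ∈ X, rkVec Fq x ≤ i) ∨ X = ⊤) := by
  refine ⟨fun hmod => ?_, ?_⟩
  · by_contra! h
    obtain ⟨⟨z, hz, hrk⟩, hXt⟩ := h
    exact hXt (eq_top_of_isModularElt_of_lt_rkVec hi hX hmod hz hrk)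
  · rintro (hle | rfl)
    · exact isModularElt_of_forall_rkVec_le hle
    · exact isModularElt_top

theorem modular_elements_characterization (q m n : ℕ) (hq : IsPrimePow q) (hn : 2 ≤ n)
    (hm : 2 ≤ m) (Fq L : Type) [Field Fq] [Field L] [Algebra Fq L] [Fintype Fq]
    (hcard : Fintype.card Fq = q) (hdim : Module.finrank Fq L = m)
    (i : ℕ) (hi : 2 ≤ i) (hin : i ≤ n)
    (X : Submodule L (Fin n → L)) (hX : X ∈ RML Fq L n i) :
    IsModularElt Fq i X ↔ ((∀ x ∈ X, rkVec Fq x ≤ i) ∨ X = ⊤) :=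
  modular_elements_characterization_general n Fq L i hi X hX
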